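/- arXiv:0811.2951 — 6 statements merged into one kernel-verified Lean document; each statement's English description precedes it below -/
import Mathlib

section
/- Let ξ' be an endomorphism of a Lie algebra 𝔤 such that there exists a linear map α with [ξ', ad_x] = ad_{α(x)} for all x. Then ξ' preserves every ideal 𝔄 of 𝔤 satisfying [𝔄,𝔄] = 𝔄. -/
/-! Evaluating the hypothesis at `b` gives `ξ ⁅a, b⁆ = ⁅α a, b⁆ + ⁅a, ξ b⁆`, so `ξ` maps every
bracket of elements of `A` into `A`; a perfect ideal is spanned by such brackets. -/

namespace LinearMap

variable {k L : Type*} [CommRing k] [LieRing L] [LieAlgebra k L] {ξ α : L →ₗ[k] L}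

theorem apply_lie_eq_of_commutator_ad_eq_ad
    (h : ∀ x : L, ξ ∘ₗ LieAlgebra.ad k L x - LieAlgebra.ad k L x ∘ₗ ξ = LieAlgebra.ad k L (α x))
    (a b : L) : ξ ⁅a, b⁆ = ⁅α a, b⁆ + ⁅a, ξ b⁆ := by
  have hab := LinearMap.congr_fun (h a) b
  simp only [LinearMap.sub_apply, LinearMap.comp_apply, LieAlgebra.ad_apply] at hab
  rw [← hab, sub_add_cancel]

theorem apply_mem_sup_of_mem_lie_of_commutator_ad_eq_ad
    (h : ∀ x : L, ξ ∘ₗ LieAlgebra.ad k L x - LieAlgebra.ad k L x ∘ₗ ξ = LieAlgebra.ad k L (α x))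
    (I J : LieIdeal k L) {x : L} (hx : x ∈ ⁅I, J⁆) : ξ x ∈ I ⊔ J := by
  suffices (⁅I, J⁆ : LieIdeal k L).toSubmodule ≤ (I ⊔ J).toSubmodule.comap ξ from this hx
  rw [LieSubmodule.lieIdeal_oper_eq_linear_span', Submodule.span_le]
  rintro _ ⟨a, ha, b, hb, rfl⟩
  rw [SetLike.mem_coe, Submodule.mem_comap, apply_lie_eq_of_commutator_ad_eq_ad h]
  exact add_mem (LieSubmodule.mem_sup_right (J.lie_mem hb))
    (LieSubmodule.mem_sup_left (lie_mem_left k L I a (ξ b) ha))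

end LinearMap

theorem xi_preserves_perfect_ideal_general {k : Type*} [Field k] {L : Type*} [LieRing L]
    [LieAlgebra k L] (ξ α : L →ₗ[k] L)
    (h : ∀ x : L, ξ ∘ₗ LieAlgebra.ad k L x - LieAlgebra.ad k L x ∘ₗ ξ = LieAlgebra.ad k L (α x))
    (A : LieIdeal k L) (hA : ⁅A, A⁆ = A) :
    ∀ x ∈ A, ξ x ∈ A := by
  intro x hx
  rw [← hA] at hx
  simpa only [sup_idem] using LinearMap.apply_mem_sup_of_mem_lie_of_commutator_ad_eq_ad h A A hx

theorem xi_preserves_perfect_ideal {k : Type*} [Field k] [CharZero k] {L : Type*} [LieRing L]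
    [LieAlgebra k L] (ξ α : L →ₗ[k] L)
    (h : ∀ x : L, ξ ∘ₗ LieAlgebra.ad k L x - LieAlgebra.ad k L x ∘ₗ ξ = LieAlgebra.ad k L (α x))
    (A : LieIdeal k L) (hA : ⁅A, A⁆ = A) :
    ∀ x ∈ A, ξ x ∈ A :=
  xi_preserves_perfect_ideal_general ξ α h A hA
end

section
/- Let 𝔤 be a Lie algebra and ψ : 𝔤* → 𝔤 a linear map satisfying ψ∘ad*_x = ad_x∘ψ for all x ∈ 𝔤 and ad*_{ψ(f)} g = ad*_{ψ(g)} f for all f,g ∈ 𝔤*. Then [ψ(f), ψ(g)] = 0 for all f,g ∈ 𝔤*, i.e. the image of ψ is an abelian subalgebra, and moreover ψ(ad*_{ψ(g)} f) = 0 for all f,g. -/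
variable (k : Type*) [Field k] [CharZero k] (L : Type*) [LieRing L] [LieAlgebra k L]

/-- The coadjoint action: `(coad x f) y = -f ⁅x, y⁆`. -/
def coad (x : L) : Module.Dual k L →ₗ[k] Module.Dual k L :=
  -(LieAlgebra.ad k L x).dualMap

variable {k L}

/-! The equivariance of `ψ` turns `ψ (ad*_{ψ f} g)` into `⁅ψ f, ψ g⁆`, so the symmetry of
`ad*_{ψ f} g` in `f, g` makes the bracket `⁅ψ f, ψ g⁆` symmetric; being also antisymmetric, it
vanishes in characteristic zero. -/

theorem lie_eq_zero_of_lie_eq_lie_swap {M : Type*} [LieRing M] [IsAddTorsionFree M] {x y : M}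
    (h : ⁅x, y⁆ = ⁅y, x⁆) : ⁅x, y⁆ = 0 :=
  self_eq_neg.mp (h.trans (lie_skew y x).symm)

theorem image_psi_abelian_general (ψ : Module.Dual k L →ₗ[k] L)
    (hψ : ∀ (x : L) (f : Module.Dual k L), ψ (coad k L x f) = ⁅x, ψ f⁆)
    (hcomm : ∀ f g : Module.Dual k L, coad k L (ψ f) g = coad k L (ψ g) f) :
    (∀ f g : Module.Dual k L, ⁅ψ f, ψ g⁆ = 0) ∧
      (∀ f g : Module.Dual k L, ψ (coad k L (ψ g) f) = 0) := by
  have : IsAddTorsionFree L := .of_isTorsionFree k L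
  have abelian (f g : Module.Dual k L) : ⁅ψ f, ψ g⁆ = 0 :=
    lie_eq_zero_of_lie_eq_lie_swap (by rw [← hψ, ← hψ, hcomm])
  exact ⟨abelian, fun f g => by rw [hψ, abelian]⟩

theorem image_psi_abelian [FiniteDimensional k L] (ψ : Module.Dual k L →ₗ[k] L)
    (hψ : ∀ (x : L) (f : Module.Dual k L), ψ (coad k L x f) = ⁅x, ψ f⁆)
    (hcomm : ∀ f g : Module.Dual k L, coad k L (ψ f) g = coad k L (ψ g) f) :
    (∀ f g : Module.Dual k L, ⁅ψ f, ψ g⁆ = 0) ∧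
      (∀ f g : Module.Dual k L, ψ (coad k L (ψ g) f) = 0) :=
  image_psi_abelian_general ψ hψ hcomm
end

section
/- Let 𝔤 be a non-abelian Lie algebra and ψ : 𝔤* → 𝔤 a linear map with ψ∘ad*_x = ad_x∘ψ for all x and ad*_{ψ(f)} g = ad*_{ψ(g)} f for all f,g ∈ 𝔤*. Then ψ is not bijective. -/
/-!
Write `T f g h := h ⁅ψ f, ψ g⁆`. It is antisymmetric in `f, g` because the bracket is, while the
compatibility `ad*_{ψ f} g = ad*_{ψ g} f`, evaluated at `ψ g`, makes it symmetric in `f, h`.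
A trilinear form with both symmetries vanishes in characteristic `≠ 2`, so `⁅ψ f, ψ g⁆ = 0` for all
`f, g`; if `ψ` were onto, `𝔤` would be abelian.
-/

variable (k : Type*) [Field k] [CharZero k] (L : Type*) [LieRing L] [LieAlgebra k L]

variable {k L}

/-- Alternating the two swaps six times returns to `T a b c` after three sign changes. -/
theorem eq_zero_of_antisymm_left_of_symm_outer {α M : Type*} [AddCommGroup M] [IsAddTorsionFree M]
    {T : α → α → α → M} (hanti : ∀ a b c, T a b c = -T b a c)
    (hsymm : ∀ a b c, T a b c = T c b a) (a b c : α) : T a b c = 0 := by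
  have hneg : T a b c = -T a b c := by
    calc T a b c = -T b a c := hanti a b c
      _ = -T c a b := by rw [hsymm b a c]
      _ = T a c b := by rw [hanti c a b, neg_neg]
      _ = T b c a := hsymm a c b
      _ = -T c b a := hanti b c a
      _ = -T a b c := by rw [hsymm c b a]
  rw [← two_nsmul_eq_zero, two_nsmul]
  exact add_eq_zero_iff_eq_neg.mpr hneg

omit [CharZero k] in
theorem coad_apply (x : L) (f : Module.Dual k L) (y : L) : coad k L x f y = -f ⁅x, y⁆ := rfl

omit [CharZero k] in
theorem apply_lie_comm_of_coad_comm {ψ : Module.Dual k L →ₗ[k] L}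
    (hcomm : ∀ f g : Module.Dual k L, coad k L (ψ f) g = coad k L (ψ g) f)
    (f g : Module.Dual k L) (z : L) : g ⁅ψ f, z⁆ = f ⁅ψ g, z⁆ := by
  simpa only [coad_apply, neg_inj] using LinearMap.congr_fun (hcomm f g) z

theorem lie_eq_zero_of_coad_comm {ψ : Module.Dual k L →ₗ[k] L}
    (hcomm : ∀ f g : Module.Dual k L, coad k L (ψ f) g = coad k L (ψ g) f)
    (f g : Module.Dual k L) : ⁅ψ f, ψ g⁆ = 0 := by
  refine (Module.forall_dual_apply_eq_zero_iff k _).mp fun h => ?_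
  refine eq_zero_of_antisymm_left_of_symm_outer (T := fun f g h : Module.Dual k L => h ⁅ψ f, ψ g⁆)
    (fun a b c => ?_) (fun a b c => ?_) f g h
  · rw [← lie_skew, map_neg]
  · exact apply_lie_comm_of_coad_comm hcomm a c (ψ b)

theorem psi_not_bijective_general (hna : ¬ ∀ x y : L, ⁅x, y⁆ = 0)
    (ψ : Module.Dual k L →ₗ[k] L)
    (hcomm : ∀ f g : Module.Dual k L, coad k L (ψ f) g = coad k L (ψ g) f) :
    ¬ Function.Bijective ψ := by
  intro hψ
  apply hna
  intro x y
  obtain ⟨f, rfl⟩ := hψ.surjective x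
  obtain ⟨g, rfl⟩ := hψ.surjective y
  exact lie_eq_zero_of_coad_comm hcomm f g

theorem psi_not_bijective [FiniteDimensional k L] (hna : ¬ ∀ x y : L, ⁅x, y⁆ = 0)
    (ψ : Module.Dual k L →ₗ[k] L)
    (hψ : ∀ (x : L) (f : Module.Dual k L), ψ (coad k L x f) = ⁅x, ψ f⁆)
    (hcomm : ∀ f g : Module.Dual k L, coad k L (ψ f) g = coad k L (ψ g) f) :
    ¬ Function.Bijective ψ :=
  psi_not_bijective_general hna ψ hcomm
end

section
/- If 𝔤 is a semisimple Lie algebra, then every linear map ψ : 𝔤* → 𝔤 satisfying ψ∘ad*_x = ad_x∘ψ for all x ∈ 𝔤 and ad*_{ψ(f)} g = ad*_{ψ(g)} f for all f,g ∈ 𝔤* is identically zero. -/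
variable (k : Type*) [Field k] [CharZero k] (L : Type*) [LieRing L] [LieAlgebra k L]

variable {k L}

/-!
An `L`-equivariant map `ψ : M → L` whose values act symmetrically, `⁅ψ m, n⁆ = ⁅ψ n, m⁆`, has
commuting values: `⁅ψ m, ψ n⁆ = ψ ⁅ψ m, n⁆` is then symmetric in `m, n` as well as antisymmetric.
Its range is therefore an abelian ideal, which vanishes when `L` has trivial radical. Since
`coad x f` is Mathlib's Lie module structure `⁅x, f⁆` on the dual, the theorem is the case `M = 𝔤*`.
-/

namespace LieModuleHom

variable {R L M : Type*} [CommRing R] [LieRing L] [LieAlgebra R L]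
  [AddCommGroup M] [Module R M] [LieRingModule L M]

theorem lie_apply_eq_zero_of_lie_symm [IsAddTorsionFree L] (φ : M →ₗ⁅R,L⁆ L)
    (h : ∀ m n, ⁅φ m, n⁆ = ⁅φ n, m⁆) (m n : M) : ⁅φ m, φ n⁆ = 0 :=
  self_eq_neg.mp <| calc
    ⁅φ m, φ n⁆ = φ ⁅φ m, n⁆ := (φ.map_lie _ _).symm
    _ = φ ⁅φ n, m⁆ := by rw [h]
    _ = ⁅φ n, φ m⁆ := φ.map_lie _ _
    _ = -⁅φ m, φ n⁆ := (lie_skew _ _).symm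

theorem isLieAbelian_range_of_lie_symm [IsAddTorsionFree L] (φ : M →ₗ⁅R,L⁆ L)
    (h : ∀ m n, ⁅φ m, n⁆ = ⁅φ n, m⁆) : IsLieAbelian φ.range where
  trivial := by
    rintro ⟨_, m, rfl⟩ ⟨_, n, rfl⟩
    exact Subtype.ext (φ.lie_apply_eq_zero_of_lie_symm h m n)

theorem eq_zero_of_lie_symm [IsAddTorsionFree L] [LieAlgebra.HasTrivialRadical R L]
    (φ : M →ₗ⁅R,L⁆ L) (h : ∀ m n, ⁅φ m, n⁆ = ⁅φ n, m⁆) : φ = 0 := by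
  have hrange : φ.range = ⊥ :=
    (LieAlgebra.hasTrivialRadical_iff_no_abelian_ideals R L).mp inferInstance φ.range
      (φ.isLieAbelian_range_of_lie_symm h)
  ext m
  simpa using hrange.le ⟨m, rfl⟩

end LieModuleHom

theorem psi_eq_zero_of_semisimple_general [LieAlgebra.IsSemisimple k L]
    (ψ : Module.Dual k L →ₗ[k] L)
    (hψ : ∀ (x : L) (f : Module.Dual k L), ψ (coad k L x f) = ⁅x, ψ f⁆)
    (hcomm : ∀ f g : Module.Dual k L, coad k L (ψ f) g = coad k L (ψ g) f) :
    ψ = 0 := by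
  have : IsAddTorsionFree L := .of_isTorsionFree k L
  let φ : Module.Dual k L →ₗ⁅k,L⁆ L := { ψ with map_lie' := hψ _ _ }
  exact congrArg LieModuleHom.toLinearMap (φ.eq_zero_of_lie_symm hcomm)

theorem psi_eq_zero_of_semisimple [FiniteDimensional k L] [LieAlgebra.IsSemisimple k L]
    (ψ : Module.Dual k L →ₗ[k] L)
    (hψ : ∀ (x : L) (f : Module.Dual k L), ψ (coad k L x f) = ⁅x, ψ f⁆)
    (hcomm : ∀ f g : Module.Dual k L, coad k L (ψ f) g = coad k L (ψ g) f) :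
    ψ = 0 :=
  psi_eq_zero_of_semisimple_general ψ hψ hcomm
end

section
/- Let 𝔤 be a Lie algebra, 𝔤* its dual with the coadjoint 𝔤-action, and 𝒟 = 𝔤 ⋉ 𝔤* the semidirect product Lie algebra with bracket [(x,f),(y,g)] = ([x,y], ad*_x g − ad*_y f). A linear map φ : 𝒟 → 𝒟, written φ(x,f) = (φ₁₁(x)+φ₂₁(f), φ₁₂(x)+φ₂₂(f)), is a derivation of 𝒟 if and only if: (1) φ₁₁ is a derivation of 𝔤; (2) φ₁₂([x,y]) = ad*_x φ₁₂(y) − ad*_y φ₁₂(x) for all x,y; (3) φ₂₁∘ad*_x = ad_x∘φ₂₁ for all x; (4) φ₂₂∘ad*_x − ad*_x∘φ₂₂ = ad*_{φ₁₁(x)} for all x; and (5) ad*_{φ₂₁(f)} g = ad*_{φ₂₁(g)} f for all f,g ∈ 𝔤*. -/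
variable (k : Type*) [Field k] [CharZero k] (L : Type*) [LieRing L] [LieAlgebra k L]

/-- The bracket of the cotangent Lie algebra `𝒟 = 𝔤 ⋉ 𝔤*`. -/
def Dbracket (u v : L × Module.Dual k L) : L × Module.Dual k L :=
  (⁅u.1, v.1⁆, coad k L u.1 v.2 - coad k L v.1 u.2)

variable {k L}

/-!
The derivation defect `φ[u, v] - [φ u, v] - [u, φ v]` of a linear map `φ` of `𝒟` is biadditive
and antisymmetric, so it vanishes as soon as it vanishes on pairs of elements of `𝔤 × 0` and
`0 × 𝔤*`. On the pairs `((x, 0), (y, 0))`, `((x, 0), (0, f))` and `((0, f), (0, g))` the two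
components of the defect of the block map `(φᵢⱼ)` are exactly conditions (1)–(5).
-/

section

omit [CharZero k]

lemma coad_add (x y : L) : coad k L (x + y) = coad k L x + coad k L y := by
  ext f z
  simp only [coad, LinearMap.neg_apply, LinearMap.add_apply, LinearMap.dualMap_apply,
    LieAlgebra.ad_apply, map_add]
  abel

@[simp]
lemma coad_zero : coad k L (0 : L) = 0 := by
  ext f z
  simp [coad]

lemma Dbracket_add_left (u v w : L × Module.Dual k L) :
    Dbracket k L (u + v) w = Dbracket k L u w + Dbracket k L v w := by
  refine Prod.ext ?_ ?_ <;>
    simp only [Dbracket, Prod.fst_add, Prod.snd_add, add_lie, coad_add, map_add,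
      LinearMap.add_apply]
  abel

lemma Dbracket_swap (u v : L × Module.Dual k L) : Dbracket k L v u = -Dbracket k L u v := by
  refine Prod.ext ?_ ?_ <;> simp only [Dbracket, Prod.fst_neg, Prod.snd_neg, neg_sub]
  exact (lie_skew _ _).symm

lemma Dbracket_add_right (u v w : L × Module.Dual k L) :
    Dbracket k L u (v + w) = Dbracket k L u v + Dbracket k L u w := by
  rw [Dbracket_swap, Dbracket_add_left, neg_add, ← Dbracket_swap, ← Dbracket_swap]

@[simp]
lemma Dbracket_inl_left (x : L) (v : L × Module.Dual k L) :
    Dbracket k L (x, 0) v = (⁅x, v.1⁆, coad k L x v.2) := by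
  simp [Dbracket]

@[simp]
lemma Dbracket_inl_right (u : L × Module.Dual k L) (y : L) :
    Dbracket k L u (y, 0) = (⁅u.1, y⁆, -coad k L y u.2) := by
  simp [Dbracket]

@[simp]
lemma Dbracket_inr_left (f : Module.Dual k L) (v : L × Module.Dual k L) :
    Dbracket k L (0, f) v = (0, -coad k L v.1 f) := by
  simp [Dbracket]

@[simp]
lemma Dbracket_inr_right (u : L × Module.Dual k L) (g : Module.Dual k L) :
    Dbracket k L u (0, g) = (0, coad k L u.1 g) := by
  simp [Dbracket]

section Leibniz

variable (φ : (L × Module.Dual k L) →ₗ[k] L × Module.Dual k L)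

def IsLeibnizAt (u v : L × Module.Dual k L) : Prop :=
  φ (Dbracket k L u v) = Dbracket k L (φ u) v + Dbracket k L u (φ v)

variable {φ}

lemma IsLeibnizAt.symm {u v : L × Module.Dual k L} (h : IsLeibnizAt φ u v) :
    IsLeibnizAt φ v u := by
  rw [IsLeibnizAt, Dbracket_swap, map_neg, h, Dbracket_swap (φ u), Dbracket_swap u, neg_add,
    add_comm]

lemma IsLeibnizAt.add_left {u v w : L × Module.Dual k L} (hu : IsLeibnizAt φ u w)
    (hv : IsLeibnizAt φ v w) : IsLeibnizAt φ (u + v) w := by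
  rw [IsLeibnizAt, Dbracket_add_left, map_add, hu, hv, map_add, Dbracket_add_left,
    Dbracket_add_left]
  abel

lemma IsLeibnizAt.add_right {u v w : L × Module.Dual k L} (hv : IsLeibnizAt φ u v)
    (hw : IsLeibnizAt φ u w) : IsLeibnizAt φ u (v + w) :=
  (hv.symm.add_left hw.symm).symm

lemma forall_isLeibnizAt_iff :
    (∀ u v, IsLeibnizAt φ u v) ↔
      (∀ x y : L, IsLeibnizAt φ (x, 0) (y, 0)) ∧
        (∀ (x : L) (f : Module.Dual k L), IsLeibnizAt φ (x, 0) (0, f)) ∧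
        (∀ f g : Module.Dual k L, IsLeibnizAt φ (0, f) (0, g)) := by
  refine ⟨fun h => ⟨fun _ _ => h _ _, fun _ _ => h _ _, fun _ _ => h _ _⟩, ?_⟩
  rintro ⟨hLL, hLD, hDD⟩ ⟨x, f⟩ ⟨y, g⟩
  have split (z : L) (h : Module.Dual k L) : (z, h) = (z, 0) + (0, h) := by simp
  rw [split x f, split y g]
  exact ((hLL x y).add_right (hLD x g)).add_left ((hLD y f).symm.add_right (hDD f g))

end Leibniz

section BlockMap

variable (φ₁₁ : L →ₗ[k] L) (φ₁₂ : L →ₗ[k] Module.Dual k L)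
  (φ₂₁ : Module.Dual k L →ₗ[k] L) (φ₂₂ : Module.Dual k L →ₗ[k] Module.Dual k L)

abbrev blockMap : (L × Module.Dual k L) →ₗ[k] L × Module.Dual k L :=
  (φ₁₁.coprod φ₂₁).prod (φ₁₂.coprod φ₂₂)

lemma isLeibnizAt_blockMap_inl_inl_iff (x y : L) :
    IsLeibnizAt (blockMap φ₁₁ φ₁₂ φ₂₁ φ₂₂) (x, 0) (y, 0) ↔
      φ₁₁ ⁅x, y⁆ = ⁅φ₁₁ x, y⁆ + ⁅x, φ₁₁ y⁆ ∧
        φ₁₂ ⁅x, y⁆ = coad k L x (φ₁₂ y) - coad k L y (φ₁₂ x) := by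
  simp [IsLeibnizAt, Prod.ext_iff, neg_add_eq_sub]

lemma isLeibnizAt_blockMap_inl_inr_iff (x : L) (f : Module.Dual k L) :
    IsLeibnizAt (blockMap φ₁₁ φ₁₂ φ₂₁ φ₂₂) (x, 0) (0, f) ↔
      φ₂₁ (coad k L x f) = ⁅x, φ₂₁ f⁆ ∧
        φ₂₂ (coad k L x f) - coad k L x (φ₂₂ f) = coad k L (φ₁₁ x) f := by
  simp [IsLeibnizAt, Prod.ext_iff, sub_eq_iff_eq_add]

lemma isLeibnizAt_blockMap_inr_inr_iff (f g : Module.Dual k L) :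
    IsLeibnizAt (blockMap φ₁₁ φ₁₂ φ₂₁ φ₂₂) (0, f) (0, g) ↔
      coad k L (φ₂₁ f) g = coad k L (φ₂₁ g) f := by
  simp [IsLeibnizAt, Prod.ext_iff, ← sub_eq_add_neg, eq_comm (a := (0 : Module.Dual k L)),
    sub_eq_zero]

end BlockMap

end

theorem derivation_of_D_characterization_general
    (φ₁₁ : L →ₗ[k] L) (φ₁₂ : L →ₗ[k] Module.Dual k L)
    (φ₂₁ : Module.Dual k L →ₗ[k] L) (φ₂₂ : Module.Dual k L →ₗ[k] Module.Dual k L) :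
    (∀ u v : L × Module.Dual k L,
        (fun p : L × Module.Dual k L => (φ₁₁ p.1 + φ₂₁ p.2, φ₁₂ p.1 + φ₂₂ p.2))
            (Dbracket k L u v) =
          Dbracket k L ((fun p : L × Module.Dual k L =>
              (φ₁₁ p.1 + φ₂₁ p.2, φ₁₂ p.1 + φ₂₂ p.2)) u) v +
            Dbracket k L u ((fun p : L × Module.Dual k L =>
              (φ₁₁ p.1 + φ₂₁ p.2, φ₁₂ p.1 + φ₂₂ p.2)) v)) ↔
      ((∀ x y : L, φ₁₁ ⁅x, y⁆ = ⁅φ₁₁ x, y⁆ + ⁅x, φ₁₁ y⁆) ∧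
        (∀ x y : L, φ₁₂ ⁅x, y⁆ = coad k L x (φ₁₂ y) - coad k L y (φ₁₂ x)) ∧
        (∀ (x : L) (f : Module.Dual k L), φ₂₁ (coad k L x f) = ⁅x, φ₂₁ f⁆) ∧
        (∀ (x : L) (f : Module.Dual k L),
          φ₂₂ (coad k L x f) - coad k L x (φ₂₂ f) = coad k L (φ₁₁ x) f) ∧
        (∀ f g : Module.Dual k L, coad k L (φ₂₁ f) g = coad k L (φ₂₁ g) f)) := by
  change (∀ u v, IsLeibnizAt (blockMap φ₁₁ φ₁₂ φ₂₁ φ₂₂) u v) ↔ _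
  simp only [forall_isLeibnizAt_iff, isLeibnizAt_blockMap_inl_inl_iff,
    isLeibnizAt_blockMap_inl_inr_iff, isLeibnizAt_blockMap_inr_inr_iff, forall_and, and_assoc]

theorem derivation_of_D_characterization [FiniteDimensional k L]
    (φ₁₁ : L →ₗ[k] L) (φ₁₂ : L →ₗ[k] Module.Dual k L)
    (φ₂₁ : Module.Dual k L →ₗ[k] L) (φ₂₂ : Module.Dual k L →ₗ[k] Module.Dual k L) :
    (∀ u v : L × Module.Dual k L,
        (fun p : L × Module.Dual k L => (φ₁₁ p.1 + φ₂₁ p.2, φ₁₂ p.1 + φ₂₂ p.2))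
            (Dbracket k L u v) =
          Dbracket k L ((fun p : L × Module.Dual k L =>
              (φ₁₁ p.1 + φ₂₁ p.2, φ₁₂ p.1 + φ₂₂ p.2)) u) v +
            Dbracket k L u ((fun p : L × Module.Dual k L =>
              (φ₁₁ p.1 + φ₂₁ p.2, φ₁₂ p.1 + φ₂₂ p.2)) v)) ↔
      ((∀ x y : L, φ₁₁ ⁅x, y⁆ = ⁅φ₁₁ x, y⁆ + ⁅x, φ₁₁ y⁆) ∧
        (∀ x y : L, φ₁₂ ⁅x, y⁆ = coad k L x (φ₁₂ y) - coad k L y (φ₁₂ x)) ∧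
        (∀ (x : L) (f : Module.Dual k L), φ₂₁ (coad k L x f) = ⁅x, φ₂₁ f⁆) ∧
        (∀ (x : L) (f : Module.Dual k L),
          φ₂₂ (coad k L x f) - coad k L x (φ₂₂ f) = coad k L (φ₁₁ x) f) ∧
        (∀ f g : Module.Dual k L, coad k L (φ₂₁ f) g = coad k L (φ₂₁ g) f)) :=
  derivation_of_D_characterization_general φ₁₁ φ₁₂ φ₂₁ φ₂₂
end

section
/- Let 𝔤 be a Lie algebra, 𝒟 = 𝔤 ⋉ 𝔤* its cotangent Lie algebra. If β : 𝔤 → 𝔤* is a 1-cocycle for the coadjoint action and ψ : 𝔤* → 𝔤 satisfies ψ∘ad*_x = ad_x∘ψ for all x and ad*_{ψ(f)}g = ad*_{ψ(g)}f for all f,g, then ψ∘β is a derivation of 𝔤 and β∘ψ satisfies [β∘ψ, ad*_x] = −ad*_{(ψ∘β)(x)} for all x ∈ 𝔤. -/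
variable (k : Type*) [Field k] [CharZero k] (L : Type*) [LieRing L] [LieAlgebra k L]

variable {k L}

/-! A 1-cocycle `β : 𝔤 → M` is precisely a `LieDerivation R 𝔤 M`, and the coadjoint action is
Mathlib's Lie module structure on `Module.Dual R 𝔤`. So `ψ ∘ β`, a derivation followed by a map of
`𝔤`-modules, is again a derivation. The Leibniz rule for `β` at `⁅x, ψ f⁆` gives
`[β ∘ ψ, ad*_x] f = -ad*_{ψ f} (β x)`, which the symmetry of `ψ` turns into `-ad*_{ψ (β x)} f`. -/

section

variable {R 𝔤 M N : Type*} [CommRing R] [LieRing 𝔤] [LieAlgebra R 𝔤]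
  [AddCommGroup M] [Module R M] [LieRingModule 𝔤 M] [LieModule R 𝔤 M]
  [AddCommGroup N] [Module R N] [LieRingModule 𝔤 N] [LieModule R 𝔤 N]

def LieModuleHom.compLieDerivation (ψ : M →ₗ⁅R,𝔤⁆ N) (D : LieDerivation R 𝔤 M) :
    LieDerivation R 𝔤 N where
  toLinearMap := (ψ : M →ₗ[R] N) ∘ₗ D
  leibniz' a b := by simp

theorem LieDerivation.apply_lieModuleHom_lie_sub (D : LieDerivation R 𝔤 M) (ψ : M →ₗ⁅R,𝔤⁆ 𝔤)
    (x : 𝔤) (m : M) : D (ψ ⁅x, m⁆) - ⁅x, D (ψ m)⁆ = -⁅ψ m, D x⁆ := by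
  rw [LieModuleHom.map_lie, D.apply_lie_eq_sub, sub_sub_cancel_left]

end

theorem coad_eq_lie {K : Type*} [Field K] {𝔤 : Type*} [LieRing 𝔤] [LieAlgebra K 𝔤] (x : 𝔤)
    (f : Module.Dual K 𝔤) : coad K 𝔤 x f = ⁅x, f⁆ :=
  rfl

theorem psi_beta_der_and_beta_psi_general
    (β : L →ₗ[k] Module.Dual k L)
    (hβ : ∀ x y : L, β ⁅x, y⁆ = coad k L x (β y) - coad k L y (β x))
    (ψ : Module.Dual k L →ₗ[k] L)
    (hψ : ∀ (x : L) (f : Module.Dual k L), ψ (coad k L x f) = ⁅x, ψ f⁆)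
    (hcomm : ∀ f g : Module.Dual k L, coad k L (ψ f) g = coad k L (ψ g) f) :
    (∀ x y : L, (ψ ∘ₗ β) ⁅x, y⁆ = ⁅(ψ ∘ₗ β) x, y⁆ + ⁅x, (ψ ∘ₗ β) y⁆) ∧
      (∀ (x : L) (f : Module.Dual k L),
        (β ∘ₗ ψ) (coad k L x f) - coad k L x ((β ∘ₗ ψ) f) = -(coad k L (ψ (β x)) f)) := by
  simp only [coad_eq_lie] at hβ hψ hcomm ⊢
  let βDer : LieDerivation k L (Module.Dual k L) := ⟨β, hβ⟩
  let ψHom : Module.Dual k L →ₗ⁅k,L⁆ L := ⟨ψ, fun {x f} => hψ x f⟩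
  refine ⟨fun x y => ?_, fun x f => ?_⟩
  · rw [add_comm]
    exact (ψHom.compLieDerivation βDer).apply_lie_eq_add x y
  · rw [← hcomm f (β x)]
    exact βDer.apply_lieModuleHom_lie_sub ψHom x f

theorem psi_beta_der_and_beta_psi [FiniteDimensional k L]
    (β : L →ₗ[k] Module.Dual k L)
    (hβ : ∀ x y : L, β ⁅x, y⁆ = coad k L x (β y) - coad k L y (β x))
    (ψ : Module.Dual k L →ₗ[k] L)
    (hψ : ∀ (x : L) (f : Module.Dual k L), ψ (coad k L x f) = ⁅x, ψ f⁆)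
    (hcomm : ∀ f g : Module.Dual k L, coad k L (ψ f) g = coad k L (ψ g) f) :
    (∀ x y : L, (ψ ∘ₗ β) ⁅x, y⁆ = ⁅(ψ ∘ₗ β) x, y⁆ + ⁅x, (ψ ∘ₗ β) y⁆) ∧
      (∀ (x : L) (f : Module.Dual k L),
        (β ∘ₗ ψ) (coad k L x f) - coad k L x ((β ∘ₗ ψ) f) = -(coad k L (ψ (β x)) f)) :=
  psi_beta_der_and_beta_psi_general β hβ ψ hψ hcomm
end
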